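/- Let G be a finite group, N a nilpotent normal subgroup of G, and H a subgroup of G such that H ∩ N is a π-Hall subgroup of N and HN/N is a π-group. Then HN is π-separable and H is a π-Hall subgroup of HN. -/

import Mathlib

/-!
`H ∩ N` is a Hall subgroup of the nilpotent group `N`, hence normal in `N`, so
`1 ⊴ H ∩ N ⊴ N ⊴ HN` has factors of orders a `π`-number, a `π'`-number and a `π`-number.
By the second isomorphism theorem `|H| = |H ∩ N| |HN : N|` and `|HN : H| = |N : H ∩ N|`,
which makes `H` a `π`-Hall subgroup of `HN`.
-/

/-- `H` is a `π`-Hall subgroup: `|H|` is a `π`-number and `|G : H|` is a `π'`-number. -/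
def IsHall (π : Set ℕ) {G : Type*} [Group G] (H : Subgroup G) : Prop :=
  (∀ p : ℕ, p.Prime → p ∣ Nat.card H → p ∈ π) ∧
    ∀ p : ℕ, p.Prime → p ∣ H.index → p ∉ π
/-- `G` is `π`-separable: there is a subnormal series from `⊥` to `⊤` each of whose
factors is a `π`-group or a `π'`-group (factor orders are expressed via `relindex`). -/
def IsPiSeparable (π : Set ℕ) (G : Type*) [Group G] : Prop :=
  ∃ (n : ℕ) (f : Fin (n + 1) → Subgroup G),
    f 0 = ⊥ ∧ f (Fin.last n) = ⊤ ∧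
    ∀ i : Fin n, f i.castSucc ≤ f i.succ ∧
      ((f i.castSucc).subgroupOf (f i.succ)).Normal ∧
      ((∀ p : ℕ, p.Prime → p ∣ (f i.castSucc).relIndex (f i.succ) → p ∈ π) ∨
       (∀ p : ℕ, p.Prime → p ∣ (f i.castSucc).relIndex (f i.succ) → p ∉ π))

/-- `π'`-numbers are written `IsPiNumber πᶜ n`. -/
def IsPiNumber (π : Set ℕ) (n : ℕ) : Prop :=
  ∀ p : ℕ, p.Prime → p ∣ n → p ∈ π

namespace IsPiNumber

variable {π : Set ℕ} {a b : ℕ}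

theorem of_dvd (hb : IsPiNumber π b) (hab : a ∣ b) : IsPiNumber π a :=
  fun p hp hpa => hb p hp (hpa.trans hab)

theorem mul (ha : IsPiNumber π a) (hb : IsPiNumber π b) : IsPiNumber π (a * b) :=
  fun p hp hpab => (hp.dvd_mul.mp hpab).elim (ha p hp) (hb p hp)

theorem coprime_of_compl (ha : IsPiNumber π a) (hb : IsPiNumber πᶜ b) : a.Coprime b :=
  Nat.coprime_of_dvd fun p hp hpa hpb => hb p hp hpb (ha p hp hpa)

end IsPiNumber

namespace Subgroup

variable {G : Type*} [Group G]

theorem relIndex_dvd_relIndex_normalizer {K L : Subgroup G} (hL : L ≤ normalizer (K : Set G)) :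
    K.relIndex L ∣ K.relIndex (normalizer (K : Set G)) := by
  rw [← relIndex_subgroupOf hL]
  exact relIndex_dvd_index_of_normal _ _

theorem le_of_le_normalizer_of_isPiNumber {π : Set ℕ} {K L : Subgroup G} (hL : L ≤ normalizer (K : Set G))
    (hLπ : IsPiNumber π (Nat.card L)) (hKπ : IsPiNumber πᶜ (K.relIndex (normalizer (K : Set G)))) :
    L ≤ K :=
  relIndex_eq_one.mp <| Nat.eq_one_of_dvd_coprimes (hLπ.coprime_of_compl hKπ)
    (relIndex_dvd_card K L) (relIndex_dvd_relIndex_normalizer hL)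

theorem card_eq_card_inf_mul_relIndex_sup (H N : Subgroup G) [N.Normal] :
    Nat.card H = Nat.card (H ⊓ N : Subgroup G) * N.relIndex (H ⊔ N) := by
  rw [← relIndex_bot_left, ← relIndex_mul_relIndex ⊥ (H ⊓ N) H bot_le inf_le_left,
    relIndex_bot_left, inf_relIndex_left, relIndex_sup_right]

theorem relIndex_sup_right_eq_inf_relIndex [Finite G] (H N : Subgroup G) [N.Normal] :
    H.relIndex (H ⊔ N) = (H ⊓ N).relIndex N := by
  have hH := relIndex_mul_relIndex (H ⊓ N) H (H ⊔ N) inf_le_left le_sup_left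
  have hN := relIndex_mul_relIndex (H ⊓ N) N (H ⊔ N) inf_le_right le_sup_right
  rw [inf_relIndex_left, ← relIndex_sup_right, ← hN, mul_comm] at hH
  exact Nat.eq_of_mul_eq_mul_right (Nat.pos_of_ne_zero index_ne_zero_of_finite) hH

end Subgroup

open Subgroup
open scoped Pointwise

/-- Via the normalizer condition: a conjugate of `K` by an element normalizing `N(K)` is a
`π`-subgroup of `N(K)`, in which `K` is normal of `π'`-index, so it is `K` again. -/
theorem IsHall.normal_of_isNilpotent {G : Type*} [Group G] [Finite G] [Group.IsNilpotent G]
    {π : Set ℕ} {K : Subgroup G} (hK : IsHall π K) : K.Normal := by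
  rw [← normalizer_eq_top_iff]
  refine normalizerCondition_iff_only_full_group_self_normalizing.mp
    Group.normalizerCondition_of_isNilpotent _ (le_antisymm (fun g hg => ?_) le_normalizer)
  set c := ConjAct.toConjAct g
  have hcard : Nat.card (c • K : Subgroup G) = Nat.card K :=
    (Nat.card_congr (equivSMul c K).toEquiv).symm
  have hcM : c • K ≤ normalizer (K : Set G) := by
    rw [← conjAct_pointwise_smul_eq_self hg]
    exact pointwise_smul_le_pointwise_smul_iff.mpr le_normalizer
  have hcK : c • K ≤ K :=
    le_of_le_normalizer_of_isPiNumber hcM (hcard ▸ hK.1)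
      (IsPiNumber.of_dvd (π := πᶜ) hK.2 (relIndex_dvd_index_of_le le_normalizer))
  exact conjAct_pointwise_smul_iff.mp (eq_of_le_of_card_ge hcK hcard.ge)

theorem isPiSeparable_of_series {G : Type*} [Group G] {π : Set ℕ} {S : Subgroup G} (n : ℕ)
    (X : Fin (n + 1) → Subgroup G) (h0 : X 0 = ⊥) (hlast : X (Fin.last n) = S) (hle : ∀ i : Fin n, X i.castSucc ≤ X i.succ)
    (hnorm : ∀ i : Fin n, X i.succ ≤ normalizer (X i.castSucc : Set G))
    (hfac : ∀ i : Fin n, IsPiNumber π ((X i.castSucc).relIndex (X i.succ)) ∨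
      IsPiNumber πᶜ ((X i.castSucc).relIndex (X i.succ))) :
    IsPiSeparable π S := by
  have hS : ∀ i, X i ≤ S := fun i => hlast ▸ Fin.monotone_iff_le_succ.mpr hle (Fin.le_last i)
  have hle' : ∀ i : Fin n, (X i.castSucc).subgroupOf S ≤ (X i.succ).subgroupOf S :=
    fun i x hx => hle i hx
  refine ⟨n, fun i => (X i).subgroupOf S, by simp [h0], by simp [hlast], fun i => ⟨hle' i, ?_, ?_⟩⟩
  · dsimp only
    rw [normal_subgroupOf_iff_le_normalizer (hle' i), ← subgroupOf_normalizer_eq (hS _)]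
    exact fun x hx => hnorm i hx
  · dsimp only
    rw [relIndex_subgroupOf (hS _)]
    exact hfac i

/-- If `N ⊴ G` is nilpotent, `H ∩ N` is `π`-Hall in `N` and `HN/N` is a `π`-group,
then `HN` is `π`-separable and `H` is a `π`-Hall subgroup of `HN`. -/
theorem stmt6 {G : Type*} [Group G] [Finite G] (π : Set ℕ) (N H : Subgroup G)
    [N.Normal] (hnil : Group.IsNilpotent N)
    (hHall : IsHall π ((H ⊓ N).subgroupOf N))
    (hquot : ∀ p : ℕ, p.Prime → p ∣ N.relIndex (H ⊔ N) → p ∈ π) :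
    IsPiSeparable π ↥(H ⊔ N) ∧ IsHall π (H.subgroupOf (H ⊔ N)) := by
  have hKN : ((H ⊓ N).subgroupOf N).Normal := hHall.normal_of_isNilpotent
  have hKπ : IsPiNumber π (Nat.card (H ⊓ N : Subgroup G)) := by
    rw [← Nat.card_congr (subgroupOfEquivOfLe inf_le_right).toEquiv]
    exact hHall.1
  have hKπ' : IsPiNumber πᶜ ((H ⊓ N).relIndex N) := hHall.2
  refine ⟨isPiSeparable_of_series 3 ![⊥, H ⊓ N, N, H ⊔ N] rfl rfl ?_ ?_ ?_, ?_, ?_⟩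
  · intro i; fin_cases i
    exacts [bot_le, inf_le_right, le_sup_right]
  · intro i; fin_cases i
    exacts [le_top.trans (normalizer_eq_top (H := ⊥)).ge,
      (normal_subgroupOf_iff_le_normalizer inf_le_right).mp hKN,
      le_top.trans (normalizer_eq_top (H := N)).ge]
  · intro i; fin_cases i
    exacts [Or.inl (relIndex_bot_left (H ⊓ N) ▸ hKπ), Or.inr hKπ', Or.inl hquot]
  · rw [Nat.card_congr (subgroupOfEquivOfLe le_sup_left).toEquiv,
      card_eq_card_inf_mul_relIndex_sup H N]
    exact hKπ.mul hquot
  · exact (relIndex_sup_right_eq_inf_relIndex H N ▸ hKπ' : IsPiNumber πᶜ (H.relIndex (H ⊔ N)))
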